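/- The restriction map |_J is right H_J-linear: for all g ∈ H_J and h ∈ H, (h·g)|_J = (h|_J)·g. -/

import Mathlib

open LaurentPolynomial

noncomputable section
attribute [local instance] Classical.propDecidable

namespace HeckeRes

variable {B : Type} {W : Type} [Group W] {M : CoxeterMatrix B}

/-- The Laurent polynomial ring ℤ[q^{±1}]. -/
abbrev R : Type := LaurentPolynomial ℤ

/-- The variable q. -/
abbrev q : R := LaurentPolynomial.T 1

/-- The inverse variable q⁻¹. -/
abbrev qinv : R := LaurentPolynomial.T (-1)

/-- Bruhat order: u ≤ w iff some reduced word for w has a subword with product u. -/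
def bruhatLE (cs : CoxeterSystem M W) (u w : W) : Prop :=
  ∃ l : List B, cs.IsReduced l ∧ cs.wordProd l = w ∧
    ∃ l' : List B, l'.Sublist l ∧ cs.wordProd l' = u

def bruhatLT (cs : CoxeterSystem M W) (u w : W) : Prop :=
  bruhatLE cs u w ∧ u ≠ w

/-- The standard parabolic subgroup W_J. -/
def WJ (cs : CoxeterSystem M W) (J : Set B) : Subgroup W :=
  Subgroup.closure (cs.simple '' J)

/-- Minimal length representatives of left cosets W/W_J: no right descents in J. -/
def IsMinRep (cs : CoxeterSystem M W) (J : Set B) (u : W) : Prop :=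
  ∀ i ∈ J, cs.length (u * cs.simple i) = cs.length u + 1

/-- Minimal length representatives of right cosets W_J\W: no left descents in J. -/
def IsMinRepR (cs : CoxeterSystem M W) (J : Set B) (u : W) : Prop :=
  ∀ i ∈ J, cs.length (cs.simple i * u) = cs.length u + 1

variable {H : Type} [Ring H] [Algebra R H]

/-- Axioms making a basis of H indexed by W into the standard basis of the Hecke
algebra of (W,S), with quadratic relation T_s² = 1 + (q⁻¹ - q) T_s. -/
structure IsHeckeBasis (cs : CoxeterSystem M W) (Tb : Module.Basis W R H) : Prop where
  T_one : Tb 1 = 1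
  T_mul : ∀ u v : W, cs.length (u * v) = cs.length u + cs.length v →
    Tb u * Tb v = Tb (u * v)
  simple_mul : ∀ (i : B) (w : W), cs.length (cs.simple i * w) < cs.length w →
    Tb (cs.simple i) * Tb w = Tb (cs.simple i * w) + (qinv - q) • Tb w
  mul_simple : ∀ (w : W) (i : B), cs.length (w * cs.simple i) < cs.length w →
    Tb w * Tb (cs.simple i) = Tb (w * cs.simple i) + (qinv - q) • Tb w

/-- The restriction map |_J : H → H, T_w ↦ T_w if w ∈ W_J and 0 otherwise. -/
def resMap (cs : CoxeterSystem M W) (Tb : Module.Basis W R H) (J : Set B) : H →ₗ[R] H :=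
  Tb.constr R (fun w => if w ∈ WJ cs J then Tb w else 0)

/-- The parabolic subalgebra H_J, as the span of {T_w : w ∈ W_J}. -/
def HJ (cs : CoxeterSystem M W) (Tb : Module.Basis W R H) (J : Set B) : Submodule R H :=
  Submodule.span R (Tb '' (WJ cs J : Set W))

/-- A Laurent polynomial lies in ℤ[q]. -/
def IsPoly (p : R) : Prop := ∃ f : Polynomial ℤ, p = f.toLaurent

/-- Axioms for the Kazhdan–Lusztig basis: C_w = Σ_{x ≤ w} h_{x,w}(q) T_x with
h_{w,w} = 1 and h_{x,w} ∈ qℤ[q] for x ≠ w. -/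
structure IsKLBasis (cs : CoxeterSystem M W) (Tb : Module.Basis W R H) (C : W → H) : Prop where
  repr_self : ∀ w : W, Tb.repr (C w) w = 1
  repr_eq_zero : ∀ x w : W, ¬ bruhatLE cs x w → Tb.repr (C w) x = 0
  repr_mem : ∀ x w : W, x ≠ w → ∃ f : Polynomial ℤ,
    Tb.repr (C w) x = q * f.toLaurent

/-- The KL polynomial h_{y,x}. -/
def klPoly (Tb : Module.Basis W R H) (C : W → H) (y x : W) : R := Tb.repr (C x) y

/-- μ(y,x): the coefficient of q in h_{y,x}. -/
def klMu (Tb : Module.Basis W R H) (C : W → H) (y x : W) : ℤ :=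
  (klPoly Tb C y x).coeff 1


lemma simple_mem_WJ (cs : CoxeterSystem M W) {J : Set B} {i : B} (hi : i ∈ J) :
    cs.simple i ∈ WJ cs J :=
  Subgroup.subset_closure ⟨i, hi, rfl⟩

lemma mul_simple_mem_WJ_iff (cs : CoxeterSystem M W) {J : Set B} {i : B} (hi : i ∈ J)
    (w : W) : w * cs.simple i ∈ WJ cs J ↔ w ∈ WJ cs J := by
  constructor
  · intro h
    have := (WJ cs J).mul_mem h (simple_mem_WJ cs hi)
    simpa [mul_assoc, cs.simple_mul_simple_self] using this
  · intro h
    exact (WJ cs J).mul_mem h (simple_mem_WJ cs hi)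

lemma resMap_basis (cs : CoxeterSystem M W) (Tb : Module.Basis W R H) (J : Set B) (w : W) :
    resMap cs Tb J (Tb w) = if w ∈ WJ cs J then Tb w else 0 :=
  Module.Basis.constr_basis Tb R _ w

/-- Lemma A: right multiplication by a simple reflection in `J` commutes with `resMap`. -/
lemma resMap_mul_simple (cs : CoxeterSystem M W) (Tb : Module.Basis W R H)
    (hT : IsHeckeBasis cs Tb) {J : Set B} {i : B} (hi : i ∈ J) (h : H) :
    resMap cs Tb J (h * Tb (cs.simple i)) = resMap cs Tb J h * Tb (cs.simple i) := by
  have key : (resMap cs Tb J).comp (LinearMap.mulRight R (Tb (cs.simple i)))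
      = (LinearMap.mulRight R (Tb (cs.simple i))).comp (resMap cs Tb J) := by
    apply Module.Basis.ext Tb
    intro w
    simp only [LinearMap.comp_apply, LinearMap.mulRight_apply, resMap_basis]
    rcases cs.length_mul_simple w i with hlen | hlen
    · -- lengths add
      have hmul : Tb w * Tb (cs.simple i) = Tb (w * cs.simple i) := by
        apply hT.T_mul
        rw [hlen, cs.length_simple]
      rw [hmul, resMap_basis]
      by_cases hw : w ∈ WJ cs J
      · rw [if_pos hw, if_pos ((mul_simple_mem_WJ_iff cs hi w).mpr hw), hmul]
      · rw [if_neg hw, if_neg (fun hc => hw ((mul_simple_mem_WJ_iff cs hi w).mp hc)),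
          zero_mul]
    · -- lengths subtract
      have hlt : cs.length (w * cs.simple i) < cs.length w := by omega
      have hmul := hT.mul_simple w i hlt
      rw [hmul, map_add, map_smul, resMap_basis, resMap_basis]
      simp only [mul_simple_mem_WJ_iff cs hi w]
      by_cases hw : w ∈ WJ cs J
      · rw [if_pos hw, if_pos hw]; exact hmul.symm
      · simp [hw]
  exact LinearMap.congr_fun key h

/-- Lemma B: `resMap` commutes with right multiplication by `Tb (π l)` for `l` a word over `J`. -/
lemma resMap_mul_word (cs : CoxeterSystem M W) (Tb : Module.Basis W R H)
    (hT : IsHeckeBasis cs Tb) {J : Set B} (l : List B) (hl : ∀ i ∈ l, i ∈ J) :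
    ∀ h : H, resMap cs Tb J (h * Tb (cs.wordProd l)) = resMap cs Tb J h * Tb (cs.wordProd l) := by
  induction l using List.reverseRecOn with
  | nil =>
    intro h
    simp [cs.wordProd_nil, hT.T_one]
  | append_singleton l i ih =>
    have hi : i ∈ J := hl i (by simp)
    have hl' : ∀ j ∈ l, j ∈ J := fun j hj => hl j (by simp [hj])
    intro h
    set u := cs.wordProd l with hu
    have hprod : cs.wordProd (l ++ [i]) = u * cs.simple i := by
      rw [← List.concat_eq_append, cs.wordProd_concat]
    rcases cs.length_mul_simple u i with hlen | hlen
    · -- lengths add : Tb (u * s i) = Tb u * Tb (s i)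
      have hmul : Tb u * Tb (cs.simple i) = Tb (u * cs.simple i) := by
        apply hT.T_mul
        rw [hlen, cs.length_simple]
      rw [hprod, ← hmul, ← mul_assoc, resMap_mul_simple cs Tb hT hi, ih hl' h, mul_assoc]
    · -- lengths subtract
      have hlt : cs.length (u * cs.simple i) < cs.length u := by omega
      have hmul := hT.mul_simple u i hlt
      have hv : Tb (u * cs.simple i)
          = Tb u * Tb (cs.simple i) - (qinv - q) • Tb u := by
        rw [hmul]; abel
      rw [hprod, hv, mul_sub, map_sub, ← mul_assoc, resMap_mul_simple cs Tb hT hi, ih hl' h,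
        mul_smul_comm, map_smul, ih hl' h, mul_sub, mul_assoc, mul_smul_comm]

lemma mem_WJ_word (cs : CoxeterSystem M W) {J : Set B} {v : W} (hv : v ∈ WJ cs J) :
    ∃ l : List B, (∀ i ∈ l, i ∈ J) ∧ cs.wordProd l = v := by
  induction hv using Subgroup.closure_induction with
  | mem x hx =>
    obtain ⟨i, hi, rfl⟩ := hx
    exact ⟨[i], by simpa using hi, by simp [cs.wordProd_singleton]⟩
  | one => exact ⟨[], by simp, cs.wordProd_nil⟩
  | mul x y _ _ hx hy =>
    obtain ⟨l₁, h₁, rfl⟩ := hx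
    obtain ⟨l₂, h₂, rfl⟩ := hy
    refine ⟨l₁ ++ l₂, ?_, cs.wordProd_append l₁ l₂⟩
    intro i hi
    rcases List.mem_append.mp hi with h | h
    exacts [h₁ i h, h₂ i h]
  | inv x _ hx =>
    obtain ⟨l, h₁, rfl⟩ := hx
    exact ⟨l.reverse, fun i hi => h₁ i (List.mem_reverse.mp hi), cs.wordProd_reverse l⟩

/-- the restriction map `|_J` is right `H_J`-linear. -/
theorem resMap_right_HJ_linear (cs : CoxeterSystem M W) (Tb : Module.Basis W R H)
    (hT : IsHeckeBasis cs Tb) (J : Set B)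
    (g : H) (hg : g ∈ HJ cs Tb J) (h : H) :
    resMap cs Tb J (h * g) = resMap cs Tb J h * g := by
  induction hg using Submodule.span_induction with
  | mem x hx =>
    obtain ⟨v, hv, rfl⟩ := hx
    obtain ⟨l, hl, rfl⟩ := mem_WJ_word cs hv
    exact resMap_mul_word cs Tb hT l hl h
  | zero => simp
  | add x y _ _ hx hy => rw [mul_add, map_add, hx, hy, mul_add]
  | smul r x _ hx => rw [mul_smul_comm, map_smul, hx, mul_smul_comm]

end HeckeRes
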